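/- arXiv:2101.08710 — 2 statements merged into one kernel-verified Lean document; each statement's English description precedes it below -/
import Mathlib

section
/- Let S = K[x_1,...,x_n] with a fixed monomial order, and let J, E be ideals of S. If in(J ∩ E) = in(J) ∩ in(E), then in(J+E) = in(J) + in(E). -/
/-!
Write `f ∈ J + E` as `p + q` with `p ∈ J`, `q ∈ E` so that the larger `δ` of the leading
exponents of `p` and `q` is minimal.
If `δ` exceeded the leading exponent of `f`, the leading terms of `p` and `q` would cancel, so
`x^δ ∈ in(J) ∩ in(E) = in(J ∩ E)`; moving a multiple of some `g ∈ J ∩ E` with leading exponent `δ`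
from `p` to `q` would then lower `δ`. So the leading exponent of `f` is that of `p` or of `q`:
the leading exponents of `J + E` are those of `J` together with those of `E`.
-/

open MvPolynomial

variable {K : Type*} [Field K] {n : ℕ}

/-- The leading monomial (exponent vector) of a polynomial with respect to a monomial
order `m`: the maximum of the support; by convention `lm m 0 = 0`. -/
noncomputable def lm (m : MonomialOrder (Fin n)) (f : MvPolynomial (Fin n) K) :
    Fin n →₀ ℕ :=
  m.toSyn.symm (f.support.sup fun d => m.toSyn d)

/-- The initial ideal of `I`: the ideal generated by the leading monomials of the
nonzero elements of `I`. -/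
noncomputable def initialIdeal (m : MonomialOrder (Fin n))
    (I : Ideal (MvPolynomial (Fin n) K)) : Ideal (MvPolynomial (Fin n) K) :=
  Ideal.span {p | ∃ f ∈ I, f ≠ 0 ∧ p = monomial (lm m f) (1 : K)}

/-- `G` is a Gröbner basis of `I`: a finite set of nonzero polynomials generating `I`
whose leading monomials generate the initial ideal of `I`. -/
def IsGroebnerBasis (m : MonomialOrder (Fin n)) (I : Ideal (MvPolynomial (Fin n) K))
    (G : Set (MvPolynomial (Fin n) K)) : Prop :=
  G.Finite ∧ (0 : MvPolynomial (Fin n) K) ∉ G ∧ Ideal.span G = I ∧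
    Ideal.span ((fun g => monomial (lm m g) (1 : K)) '' G) = initialIdeal m I

/-- The S-polynomial `S(f,g)` with respect to the monomial order `m`. -/
noncomputable def sPoly (m : MonomialOrder (Fin n)) (f g : MvPolynomial (Fin n) K) :
    MvPolynomial (Fin n) K :=
  monomial (lm m f ⊔ lm m g - lm m f) (f.coeff (lm m f))⁻¹ * f -
    monomial (lm m f ⊔ lm m g - lm m g) (g.coeff (lm m g))⁻¹ * g

/-- An ideal is a monomial ideal if it is generated by monomials. -/
def IsMonomialIdeal (I : Ideal (MvPolynomial (Fin n) K)) : Prop :=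
  ∃ M : Set (Fin n →₀ ℕ), I = Ideal.span ((fun μ => (monomial μ (1 : K))) '' M)

namespace MonomialOrder

variable {σ : Type*} (m : MonomialOrder σ)

def leadingExponents {R : Type*} [CommSemiring R] (I : Ideal (MvPolynomial σ R)) :
    Set (σ →₀ ℕ) :=
  {d | ∃ f ∈ I, f ≠ 0 ∧ m.degree f = d}

variable {m}

theorem leadingExponents_mono {R : Type*} [CommSemiring R] {I I' : Ideal (MvPolynomial σ R)}
    (h : I ≤ I') : m.leadingExponents I ⊆ m.leadingExponents I' :=
  fun _ ⟨f, hf, hf0, hfd⟩ => ⟨f, h hf, hf0, hfd⟩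

theorem add_mem_leadingExponents {R : Type*} [CommSemiring R] [NoZeroDivisors R]
    [Nontrivial R] {I : Ideal (MvPolynomial σ R)} {d : σ →₀ ℕ}
    (hd : d ∈ m.leadingExponents I) (e : σ →₀ ℕ) : e + d ∈ m.leadingExponents I := by
  obtain ⟨f, hf, hf0, rfl⟩ := hd
  have hX : (monomial e (1 : R)) ≠ 0 := by simp
  refine ⟨monomial e 1 * f, I.mul_mem_left _ hf, mul_ne_zero hX hf0, ?_⟩
  classical
  rw [m.degree_mul hX hf0, m.degree_monomial, if_neg one_ne_zero]

theorem degree_mem_leadingExponents_of_coeff_ne_zero {R : Type*} [CommSemiring R]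
    {I : Ideal (MvPolynomial σ R)} {p : MvPolynomial σ R} (hp : p ∈ I) {δ : σ →₀ ℕ}
    (hpδ : m.degree p ≼[m] δ) (hcoeff : p.coeff δ ≠ 0) : δ ∈ m.leadingExponents I := by
  refine ⟨p, hp, fun h => hcoeff (by simp [h]), m.toSyn.injective (le_antisymm hpδ ?_)⟩
  exact m.le_degree (mem_support_iff.mpr hcoeff)

theorem degree_lt_of_coeff_eq_zero {R : Type*} [CommSemiring R] {p : MvPolynomial σ R}
    {δ : σ →₀ ℕ} (hδ : 0 ≺[m] δ) (hpδ : m.degree p ≼[m] δ) (hcoeff : p.coeff δ = 0) :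
    m.degree p ≺[m] δ := by
  refine lt_of_le_of_ne hpδ fun h => ?_
  rw [← m.toSyn.injective h, m.coeff_degree_eq_zero_iff] at hcoeff
  rw [hcoeff, m.degree_zero] at h
  exact hδ.ne h

theorem exists_add_eq_of_degree_add_lt {J E : Ideal (MvPolynomial σ K)}
    (H : m.leadingExponents J ∩ m.leadingExponents E ⊆ m.leadingExponents (J ⊓ E))
    {p q : MvPolynomial σ K} (hp : p ∈ J) (hq : q ∈ E) {δ : σ →₀ ℕ}
    (hpδ : m.degree p ≼[m] δ) (hqδ : m.degree q ≼[m] δ) (hδ : m.degree (p + q) ≺[m] δ) :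
    ∃ p' ∈ J, ∃ q' ∈ E, p' + q' = p + q ∧ m.degree p' ≺[m] δ ∧ m.degree q' ≺[m] δ := by
  have hδ0 : 0 ≺[m] δ := by simpa using lt_of_le_of_lt (m.zero_le _) hδ
  have hsum : p.coeff δ + q.coeff δ = 0 := by
    rw [← coeff_add]; exact m.coeff_eq_zero_of_lt hδ
  by_cases hpc : p.coeff δ = 0
  · rw [hpc, zero_add] at hsum
    exact ⟨p, hp, q, hq, rfl, degree_lt_of_coeff_eq_zero hδ0 hpδ hpc,
      degree_lt_of_coeff_eq_zero hδ0 hqδ hsum⟩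
  have hqc : q.coeff δ ≠ 0 := fun h => hpc (by simpa [h] using hsum)
  obtain ⟨g, hg, hg0, hgδ⟩ := H ⟨degree_mem_leadingExponents_of_coeff_ne_zero hp hpδ hpc,
    degree_mem_leadingExponents_of_coeff_ne_zero hq hqδ hqc⟩
  have hgc : g.coeff δ ≠ 0 := by rw [← hgδ]; exact m.coeff_degree_ne_zero_iff.mpr hg0
  set c := p.coeff δ / g.coeff δ
  have hcg : m.degree (c • g) ≼[m] δ := hgδ ▸ m.degree_smul_le
  refine ⟨p - c • g, J.sub_mem hp (Submodule.smul_of_tower_mem _ c hg.1),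
    q + c • g, E.add_mem hq (Submodule.smul_of_tower_mem _ c hg.2), sub_add_add_cancel _ _ _,
    degree_lt_of_coeff_eq_zero hδ0 (m.degree_sub_le.trans (sup_le hpδ hcg)) ?_,
    degree_lt_of_coeff_eq_zero hδ0 (m.degree_add_le.trans (sup_le hqδ hcg)) ?_⟩
  · rw [coeff_sub, coeff_smul, smul_eq_mul, div_mul_cancel₀ _ hgc, sub_self]
  · rw [coeff_add, coeff_smul, smul_eq_mul, div_mul_cancel₀ _ hgc, add_comm, hsum]

theorem exists_add_eq_degree_le {J E : Ideal (MvPolynomial σ K)}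
    (H : m.leadingExponents J ∩ m.leadingExponents E ⊆ m.leadingExponents (J ⊓ E))
    {f : MvPolynomial σ K} (hf : f ∈ J ⊔ E) :
    ∃ p ∈ J, ∃ q ∈ E, p + q = f ∧ m.degree p ≼[m] m.degree f ∧ m.degree q ≼[m] m.degree f := by
  obtain ⟨p, hp, q, hq, hpq⟩ := Submodule.mem_sup.mp hf
  obtain ⟨b, hpb, hqb⟩ : ∃ b, m.toSyn (m.degree p) ≤ b ∧ m.toSyn (m.degree q) ≤ b :=
    ⟨_, le_sup_left, le_sup_right⟩
  induction b using WellFoundedLT.induction generalizing p q with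
  | _ b ih =>
  by_cases hb : b ≤ m.toSyn (m.degree f)
  · exact ⟨p, hp, q, hq, hpq, hpb.trans hb, hqb.trans hb⟩
  obtain ⟨p', hp', q', hq', hpq', hp'b, hq'b⟩ := exists_add_eq_of_degree_add_lt H hp hq
    (δ := m.toSyn.symm b) (by simpa using hpb) (by simpa using hqb)
    (by simpa [hpq] using not_le.mp hb)
  exact ih _ (by simpa using max_lt hp'b hq'b) p' hp' q' hq' (hpq'.trans hpq)
    le_sup_left le_sup_right

theorem leadingExponents_sup {J E : Ideal (MvPolynomial σ K)}
    (H : m.leadingExponents J ∩ m.leadingExponents E ⊆ m.leadingExponents (J ⊓ E)) :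
    m.leadingExponents (J ⊔ E) = m.leadingExponents J ∪ m.leadingExponents E := by
  refine subset_antisymm ?_
    (Set.union_subset (leadingExponents_mono le_sup_left) (leadingExponents_mono le_sup_right))
  rintro _ ⟨f, hf, hf0, rfl⟩
  obtain ⟨p, hp, q, hq, rfl, hpf, hqf⟩ := exists_add_eq_degree_le H hf
  have hc : p.coeff (m.degree (p + q)) + q.coeff (m.degree (p + q)) ≠ 0 := by
    rw [← coeff_add]; exact m.coeff_degree_ne_zero_iff.mpr hf0
  by_cases hpc : p.coeff (m.degree (p + q)) = 0
  · exact Or.inr (degree_mem_leadingExponents_of_coeff_ne_zero hq hqf (by simpa [hpc] using hc))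
  · exact Or.inl (degree_mem_leadingExponents_of_coeff_ne_zero hp hpf hpc)

end MonomialOrder

open MonomialOrder

theorem lm_eq_degree (m : MonomialOrder (Fin n)) (f : MvPolynomial (Fin n) K) :
    lm m f = m.degree f :=
  rfl

theorem initialIdeal_eq_span_leadingExponents (m : MonomialOrder (Fin n))
    (I : Ideal (MvPolynomial (Fin n) K)) :
    initialIdeal m I = Ideal.span ((fun d => monomial d (1 : K)) '' m.leadingExponents I) := by
  simp_rw [initialIdeal, lm_eq_degree, Set.image]
  congr 1
  ext p
  exact ⟨fun ⟨f, hf, hf0, hp⟩ => ⟨m.degree f, ⟨f, hf, hf0, rfl⟩, hp.symm⟩,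
    fun ⟨_, ⟨f, hf, hf0, rfl⟩, hp⟩ => ⟨f, hf, hf0, hp.symm⟩⟩

theorem monomial_mem_initialIdeal_iff (m : MonomialOrder (Fin n))
    {I : Ideal (MvPolynomial (Fin n) K)} {d : Fin n →₀ ℕ} :
    monomial d (1 : K) ∈ initialIdeal m I ↔ d ∈ m.leadingExponents I := by
  classical
  rw [initialIdeal_eq_span_leadingExponents, mem_ideal_span_monomial_image]
  refine ⟨fun h => ?_, fun hd e he => ⟨d, hd, ?_⟩⟩
  · obtain ⟨e, he, hed⟩ := h d (by simp)
    simpa [tsub_add_cancel_of_le hed] using add_mem_leadingExponents he (d - e)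
  · rw [support_monomial, if_neg one_ne_zero, Finset.mem_singleton] at he
    exact he.ge

/-- If `in(J ∩ E) = in(J) ∩ in(E)`, then `in(J+E) = in(J) + in(E)`. -/
theorem stmt3 (m : MonomialOrder (Fin n)) (J E : Ideal (MvPolynomial (Fin n) K))
    (h : initialIdeal m (J ⊓ E) = initialIdeal m J ⊓ initialIdeal m E) :
    initialIdeal m (J + E) = initialIdeal m J + initialIdeal m E := by
  have H : m.leadingExponents J ∩ m.leadingExponents E ⊆ m.leadingExponents (J ⊓ E) :=
    fun d ⟨hdJ, hdE⟩ => by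
      rw [← monomial_mem_initialIdeal_iff, h]
      exact ⟨(monomial_mem_initialIdeal_iff m).mpr hdJ, (monomial_mem_initialIdeal_iff m).mpr hdE⟩
  simp only [Submodule.add_eq_sup, initialIdeal_eq_span_leadingExponents,
    leadingExponents_sup H, Set.image_union, Ideal.span_union]
end

section
/- Let J, E, E' be ideals of S = K[x_1,...,x_n] with a fixed monomial order such that (J,E) and (J,E') are Gröbner-nice pairs (i.e., in(J+E) = in(J)+in(E) and in(J+E') = in(J)+in(E')). If in((J+E) ∩ (J+E')) = in(J) + in(E ∩ E'), then (J+E) ∩ (J+E') = J + (E ∩ E') and (J, E ∩ E') is a Gröbner-nice pair. -/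
open MvPolynomial

variable {K : Type*} [Field K] {n : ℕ}

/-! Since `in(J) + in(E ∩ E') ⊆ in(J + (E ∩ E')) ⊆ in((J + E) ∩ (J + E'))`, the hypothesis makes
these equal: `(J, E ∩ E')` is G-nice, and `J + (E ∩ E') ⊆ (J + E) ∩ (J + E')` have the same
initial ideal. Dividing an element of the larger ideal by the nonzero elements
of the smaller one leaves a remainder none of whose monomials is a leading monomial of the smaller
ideal; since that remainder lies in the larger ideal, it must vanish. So the two ideals agree. -/

section InitialIdeal

variable {m : MonomialOrder (Fin n)}

theorem initialIdeal_eq_span_monomial_image (I : Ideal (MvPolynomial (Fin n) K)) :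
    initialIdeal m I =
      Ideal.span ((fun μ => monomial μ (1 : K)) '' {μ | ∃ g ∈ I, g ≠ 0 ∧ m.degree g = μ}) := by
  unfold initialIdeal
  congr 1
  ext p
  constructor
  · rintro ⟨f, hf, hf0, rfl⟩
    exact ⟨m.degree f, ⟨f, hf, hf0, rfl⟩, rfl⟩
  · rintro ⟨μ, ⟨g, hg, hg0, rfl⟩, rfl⟩
    exact ⟨g, hg, hg0, rfl⟩

theorem monomial_degree_mem_initialIdeal {I : Ideal (MvPolynomial (Fin n) K)}
    {f : MvPolynomial (Fin n) K} (hf : f ∈ I) (hf0 : f ≠ 0) :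
    monomial (m.degree f) (1 : K) ∈ initialIdeal m I :=
  Ideal.subset_span ⟨f, hf, hf0, rfl⟩

theorem exists_degree_le_of_monomial_mem_initialIdeal {I : Ideal (MvPolynomial (Fin n) K)}
    {μ : Fin n →₀ ℕ} (hμ : monomial μ (1 : K) ∈ initialIdeal m I) :
    ∃ g ∈ I, g ≠ 0 ∧ m.degree g ≤ μ := by
  rw [initialIdeal_eq_span_monomial_image, mem_ideal_span_monomial_image] at hμ
  obtain ⟨_, ⟨g, hg, hg0, rfl⟩, hle⟩ := hμ μ (by simp)
  exact ⟨g, hg, hg0, hle⟩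

theorem initialIdeal_mono {I I' : Ideal (MvPolynomial (Fin n) K)} (hle : I ≤ I') :
    initialIdeal m I ≤ initialIdeal m I' :=
  Ideal.span_mono fun _ ⟨f, hf, hf0, hp⟩ => ⟨f, hle hf, hf0, hp⟩

theorem initialIdeal_add_le (I I' : Ideal (MvPolynomial (Fin n) K)) :
    initialIdeal m I + initialIdeal m I' ≤ initialIdeal m (I + I') :=
  sup_le (initialIdeal_mono le_sup_left) (initialIdeal_mono le_sup_right)

theorem eq_of_le_of_initialIdeal_le {I I' : Ideal (MvPolynomial (Fin n) K)} (hle : I ≤ I')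
    (hin : initialIdeal m I' ≤ initialIdeal m I) : I = I' := by
  refine le_antisymm hle fun f hf => ?_
  obtain ⟨g, r, hfgr, -, hr⟩ := m.div_set (B := {b | b ∈ I ∧ b ≠ 0})
    (fun b hb => m.isUnit_leadingCoeff.mpr hb.2) f
  have hq : Finsupp.linearCombination _ (fun b : {b | b ∈ I ∧ b ≠ 0} => (b : MvPolynomial _ K))
      g ∈ I :=
    Submodule.sum_mem _ fun b _ => I.mul_mem_left _ b.2.1
  have hrI' : r ∈ I' := by
    rw [eq_sub_of_add_eq' hfgr.symm]
    exact I'.sub_mem hf (hle hq)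
  obtain rfl : r = 0 := by
    by_contra hr0
    obtain ⟨b, hbI, hb0, hbr⟩ :=
      exists_degree_le_of_monomial_mem_initialIdeal (hin (monomial_degree_mem_initialIdeal hrI' hr0))
    exact hr _ (m.degree_mem_support hr0) b ⟨hbI, hb0⟩ hbr
  rw [hfgr, add_zero]
  exact hq

end InitialIdeal

theorem stmt10_general (m : MonomialOrder (Fin n)) (J E E' : Ideal (MvPolynomial (Fin n) K))
    (h : initialIdeal m ((J + E) ⊓ (J + E')) =
      initialIdeal m J + initialIdeal m (E ⊓ E')) :
    (J + E) ⊓ (J + E') = J + (E ⊓ E') ∧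
      initialIdeal m (J + (E ⊓ E')) = initialIdeal m J + initialIdeal m (E ⊓ E') := by
  have hle : J + (E ⊓ E') ≤ (J + E) ⊓ (J + E') :=
    le_inf (sup_le_sup_left inf_le_left J) (sup_le_sup_left inf_le_right J)
  have hinit : initialIdeal m (J + (E ⊓ E')) = initialIdeal m J + initialIdeal m (E ⊓ E') :=
    le_antisymm (h ▸ initialIdeal_mono hle) (initialIdeal_add_le J (E ⊓ E'))
  exact ⟨(eq_of_le_of_initialIdeal_le hle (h.trans hinit.symm).le).symm, hinit⟩

/-- If `(J,E)` and `(J,E')` are Gröbner-nice pairs and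
`in((J+E) ∩ (J+E')) = in(J) + in(E ∩ E')`, then `(J+E) ∩ (J+E') = J + (E ∩ E')` and
`(J, E ∩ E')` is a Gröbner-nice pair. -/
theorem stmt10 (m : MonomialOrder (Fin n)) (J E E' : Ideal (MvPolynomial (Fin n) K))
    (hE : initialIdeal m (J + E) = initialIdeal m J + initialIdeal m E)
    (hE' : initialIdeal m (J + E') = initialIdeal m J + initialIdeal m E')
    (h : initialIdeal m ((J + E) ⊓ (J + E')) =
      initialIdeal m J + initialIdeal m (E ⊓ E')) :
    (J + E) ⊓ (J + E') = J + (E ⊓ E') ∧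
      initialIdeal m (J + (E ⊓ E')) = initialIdeal m J + initialIdeal m (E ⊓ E') :=
  stmt10_general m J E E' h
end
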